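/- For every graph G on n vertices, μₙ(G) + μₙ(Ḡ) ≤ −1 − s(G)²/n³, where μₙ denotes the smallest adjacency eigenvalue and s(G) = Σ_{u∈V(G)} |d(u) − 2m/n| with m = e(G). -/

import Mathlib

open Matrix SimpleGraph

/-- The eigenvalues of the adjacency matrix of `G`, in descending order:
`graphEig G i` is the `(i+1)`-th largest eigenvalue. -/
noncomputable def graphEig {n : ℕ} (G : SimpleGraph (Fin n)) (i : Fin n) : ℝ :=
  letI := Classical.decRel G.Adj
  letI hH : (G.adjMatrix ℝ).IsHermitian := by rw [Matrix.IsHermitian, conjTranspose_eq_transpose_of_trivial]; exact G.isSymm_adjMatrix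
  hH.eigenvalues (Tuple.sort hH.eigenvalues i.rev)

/-!
Write `λ`, `λ'` for the least adjacency eigenvalues of `G` and `Gᶜ`, and `A` for the adjacency
matrix of `G`. Since `A + A(Gᶜ) + I = J`, bounding the Rayleigh quotient of `G` at `u - w` and that
of `Gᶜ` at `u + w`, for `u ⊥ w`, gives
`(λ + λ' + 1) (‖u‖² + ‖w‖²) ≤ (∑ (u + w))² - 4 uᵀ A w`.
For `u = g` the vector of degree deviations `d(v) - 2m/n`, and `w = τ 𝟙`, we have `uᵀ A w = τ ‖g‖²`;
the choice `τ = ‖g‖² / n²` together with `‖g‖² ≤ n³` yields `λ + λ' + 1 ≤ -‖g‖² / n²`, and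
Cauchy–Schwarz gives `s(G)² ≤ n ‖g‖²`. When `g = 0`, the vector `u = e₀ - e₁` with `w = 0` gives
`λ + λ' ≤ -1`.
-/

open Finset

theorem Matrix.IsHermitian.mul_dotProduct_self_le_dotProduct_mulVec {ι : Type*} [Fintype ι]
    [DecidableEq ι] {A : Matrix ι ι ℝ} (hA : A.IsHermitian) {c : ℝ}
    (hc : ∀ i, c ≤ hA.eigenvalues i) (x : ι → ℝ) : c * (x ⬝ᵥ x) ≤ x ⬝ᵥ A *ᵥ x := by
  have hpsd : (A - algebraMap ℝ _ c).PosSemidef := by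
    refine posSemidef_iff_isHermitian_and_spectrum_nonneg.mpr ⟨?_, ?_⟩
    · exact hA.sub (by simp [IsHermitian, algebraMap_eq_diagonal, Pi.algebraMap_def])
    · rw [← spectrum.sub_singleton_eq, hA.spectrum_real_eq_range_eigenvalues]
      rintro _ ⟨_, ⟨i, rfl⟩, _, rfl, rfl⟩
      exact sub_nonneg.mpr (hc i)
  simpa [sub_mulVec, dotProduct_sub, algebraMap_eq_diagonal, Pi.algebraMap_def, mulVec_smul]
    using hpsd.re_dotProduct_nonneg x

theorem Tuple.apply_sort_zero_le {α : Type*} [LinearOrder α] {n : ℕ} (f : Fin (n + 1) → α)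
    (j : Fin (n + 1)) : f (Tuple.sort f 0) ≤ f j := by
  simpa using Tuple.monotone_sort f (Fin.zero_le ((Tuple.sort f)⁻¹ j))

theorem graphEig_last_mul_dotProduct_le {n : ℕ} (hn : 0 < n) (G : SimpleGraph (Fin n))
    [DecidableRel G.Adj] (x : Fin n → ℝ) :
    graphEig G ⟨n - 1, by omega⟩ * (x ⬝ᵥ x) ≤ x ⬝ᵥ G.adjMatrix ℝ *ᵥ x := by
  obtain ⟨n, rfl⟩ : ∃ k, n = k + 1 := ⟨n - 1, by omega⟩
  have hrev : (⟨n + 1 - 1, by omega⟩ : Fin (n + 1)).rev = 0 := by ext; simp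
  obtain rfl : ‹DecidableRel G.Adj› = Classical.decRel G.Adj := Subsingleton.elim _ _
  let := Classical.decRel G.Adj
  have hA := G.isHermitian_adjMatrix ℝ
  unfold graphEig
  rw [hrev]
  exact hA.mul_dotProduct_self_le_dotProduct_mulVec (Tuple.apply_sort_zero_le hA.eigenvalues) x

namespace SimpleGraph

theorem adjMatrix_add_adjMatrix_compl_add_one {V α : Type*} [AddMonoidWithOne α] [DecidableEq V]
    (G : SimpleGraph V) [DecidableRel G.Adj] :
    G.adjMatrix α + Gᶜ.adjMatrix α + 1 = of fun _ _ => 1 := by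
  ext i j
  by_cases hij : i = j
  · subst hij; simp
  · by_cases h : G.Adj i j <;> simp [h, hij, one_apply_ne hij]

variable {V : Type*} [Fintype V] (G : SimpleGraph V) [DecidableRel G.Adj]

theorem dotProduct_mulVec_adjMatrix_compl {α : Type*} [CommRing α] [DecidableEq V] (x : V → α) :
    x ⬝ᵥ Gᶜ.adjMatrix α *ᵥ x = (∑ i, x i) ^ 2 - x ⬝ᵥ x - x ⬝ᵥ G.adjMatrix α *ᵥ x := by
  have h := congrArg (fun M => x ⬝ᵥ M *ᵥ x) (G.adjMatrix_add_adjMatrix_compl_add_one (α := α))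
  simp only [add_mulVec, dotProduct_add, one_mulVec] at h
  have hJ : x ⬝ᵥ (of fun _ _ => (1 : α)) *ᵥ x = (∑ i, x i) ^ 2 := by
    rw [sq, sum_mul_sum]
    simp [dotProduct, mulVec, mul_sum]
  linear_combination h + hJ

noncomputable def degreeDeviation (v : V) : ℝ :=
  G.degree v - 2 * #G.edgeFinset / Fintype.card V

theorem degreeDeviation_eq_ncard (v : V) :
    G.degreeDeviation v =
      (G.neighborSet v).ncard - 2 * G.edgeSet.ncard / Fintype.card V := by
  rw [degreeDeviation, ← Nat.card_coe_set_eq, Nat.card_eq_fintype_card,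
    card_neighborSet_eq_degree, ← coe_edgeFinset, Set.ncard_coe_finset]

theorem sum_degreeDeviation : ∑ v, G.degreeDeviation v = 0 := by
  rcases isEmpty_or_nonempty V with hV | hV
  · simp
  · have hsum : ∑ v, (G.degree v : ℝ) = 2 * #G.edgeFinset := by
      exact_mod_cast G.sum_degrees_eq_twice_card_edges
    simp [degreeDeviation, sum_sub_distrib, hsum, mul_div_cancel₀]

theorem sum_degree_mul_degreeDeviation :
    ∑ v, G.degree v * G.degreeDeviation v = ∑ v, G.degreeDeviation v ^ 2 := by
  have h : ∀ v, G.degree v * G.degreeDeviation v - G.degreeDeviation v ^ 2 =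
      2 * #G.edgeFinset / Fintype.card V * G.degreeDeviation v := fun v => by
    unfold degreeDeviation; ring
  rw [← sub_eq_zero, ← sum_sub_distrib]
  simp only [h, ← mul_sum, sum_degreeDeviation, mul_zero]

theorem sum_degreeDeviation_sq_le : ∑ v, G.degreeDeviation v ^ 2 ≤ Fintype.card V ^ 3 :=
  calc ∑ v, G.degreeDeviation v ^ 2 = ∑ v, G.degree v * G.degreeDeviation v :=
        G.sum_degree_mul_degreeDeviation.symm
    _ ≤ ∑ v, (G.degree v : ℝ) * G.degree v := by
        gcongr with v
        exact sub_le_self _ (by positivity)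
    _ ≤ ∑ _v : V, (Fintype.card V : ℝ) * Fintype.card V := by
        gcongr with v <;> exact (G.degree_lt_card_verts v).le
    _ = Fintype.card V ^ 3 := by simp only [sum_const, card_univ, nsmul_eq_mul]; ring

end SimpleGraph

theorem graphEig_last_add_compl_add_one_mul_le {n : ℕ} (hn : 0 < n) (G : SimpleGraph (Fin n))
    [DecidableRel G.Adj] {u w : Fin n → ℝ} (huw : u ⬝ᵥ w = 0) :
    (graphEig G ⟨n - 1, by omega⟩ + graphEig Gᶜ ⟨n - 1, by omega⟩ + 1) * (u ⬝ᵥ u + w ⬝ᵥ w) ≤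
      (∑ i, (u i + w i)) ^ 2 - 4 * (u ⬝ᵥ G.adjMatrix ℝ *ᵥ w) := by
  have hx := graphEig_last_mul_dotProduct_le hn G (u - w)
  have hy := graphEig_last_mul_dotProduct_le hn Gᶜ (u + w)
  rw [dotProduct_mulVec_adjMatrix_compl] at hy
  have hsymm : w ⬝ᵥ G.adjMatrix ℝ *ᵥ u = u ⬝ᵥ G.adjMatrix ℝ *ᵥ w := by
    rw [dotProduct_mulVec, ← mulVec_transpose, transpose_adjMatrix, dotProduct_comm]
  simp only [sub_dotProduct, dotProduct_sub, add_dotProduct, dotProduct_add, mulVec_add,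
    mulVec_sub, Pi.add_apply, dotProduct_comm w u, huw, hsymm] at hx hy
  linear_combination hx + hy

theorem graphEig_last_add_compl_le_neg_one {n : ℕ} (hn : 1 < n) (G : SimpleGraph (Fin n)) :
    graphEig G ⟨n - 1, by omega⟩ + graphEig Gᶜ ⟨n - 1, by omega⟩ ≤ -1 := by
  classical
  let a : Fin n := ⟨0, by omega⟩
  let b : Fin n := ⟨1, by omega⟩
  have hab : a ≠ b := by simp [a, b, Fin.ext_iff]
  have h := graphEig_last_add_compl_add_one_mul_le (by omega) G
    (u := Pi.single a 1 - Pi.single b 1) (w := 0) (dotProduct_zero _)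
  simp only [dotProduct_sub, dotProduct_single, Pi.sub_apply, Pi.single_eq_same, ne_eq, hab,
    hab.symm, not_false_eq_true, Pi.single_eq_of_ne, sub_zero, mul_one, zero_sub, sub_neg_eq_add,
    dotProduct_zero, add_zero, Pi.zero_apply, sum_sub_distrib, sum_pi_single', mem_univ,
    ↓reduceIte, sub_self, OfNat.ofNat_ne_zero, zero_pow, mulVec_zero, mul_zero] at h
  linarith

theorem graphEig_last_add_compl_add_one_mul_le_of_degreeDeviation {n : ℕ} (hn : 0 < n)
    (G : SimpleGraph (Fin n)) [DecidableRel G.Adj] (τ : ℝ) :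
    (graphEig G ⟨n - 1, by omega⟩ + graphEig Gᶜ ⟨n - 1, by omega⟩ + 1) *
        (∑ v, G.degreeDeviation v ^ 2 + n * τ ^ 2) ≤
      (n * τ) ^ 2 - 4 * τ * ∑ v, G.degreeDeviation v ^ 2 := by
  have h := graphEig_last_add_compl_add_one_mul_le hn G (u := G.degreeDeviation)
    (w := Function.const _ τ) (by simp [dotProduct, ← sum_mul, G.sum_degreeDeviation])
  have hdw : ∑ v, G.degreeDeviation v * (G.degree v * τ) =
      τ * ∑ v, G.degreeDeviation v ^ 2 := by
    rw [← G.sum_degree_mul_degreeDeviation, mul_sum]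
    exact sum_congr rfl fun v _ => by ring
  simp only [dotProduct, ← sq, Function.const_apply, sum_const, card_univ, Fintype.card_fin,
    nsmul_eq_mul, sum_add_distrib, G.sum_degreeDeviation, zero_add, adjMatrix_mulVec_apply,
    card_neighborFinset_eq_degree, hdw] at h
  linear_combination h

theorem le_neg_sq_div_cube_of_mul_le {S F s n τ : ℝ} (hn : 0 < n) (hF : 0 < F)
    (hFn : F ≤ n ^ 3) (hs : s ^ 2 ≤ n * F) (hτ : τ * n ^ 2 = F)
    (h : S * (F + n * τ ^ 2) ≤ (n * τ) ^ 2 - 4 * τ * F) :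
    S ≤ -(s ^ 2 / n ^ 3) := by
  have hτ0 : 0 < τ := by nlinarith
  have hτn : τ ≤ n := by nlinarith
  have hsτ : s ^ 2 / n ^ 3 ≤ τ := by
    rw [div_le_iff₀ (by positivity)]; nlinarith
  have hN : 0 < F + n * τ ^ 2 := by positivity
  have hnτ : (n * τ) ^ 2 = τ * F := by rw [← hτ]; ring
  refine le_of_mul_le_mul_right (h.trans ?_) hN
  nlinarith [mul_le_mul_of_nonneg_right hsτ hN.le, mul_pos hτ0 hτ0]

theorem stmt7 (n : ℕ) (hn : 2 ≤ n) (G : SimpleGraph (Fin n)) :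
    graphEig G ⟨n - 1, by omega⟩ + graphEig Gᶜ ⟨n - 1, by omega⟩ ≤
      -1 - (∑ u : Fin n,
          |((G.neighborSet u).ncard : ℝ) - 2 * (G.edgeSet.ncard : ℝ) / n|) ^ 2 / n ^ 3 := by
  classical
  have hdev (v : Fin n) : ((G.neighborSet v).ncard : ℝ) - 2 * G.edgeSet.ncard / n =
      G.degreeDeviation v := by simp [G.degreeDeviation_eq_ncard]
  simp only [hdev]
  have hs : (∑ v, |G.degreeDeviation v|) ^ 2 ≤ n * ∑ v, G.degreeDeviation v ^ 2 := by
    simpa using sq_sum_le_card_mul_sum_sq (s := univ) (f := fun v => |G.degreeDeviation v|)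
  rcases (sum_nonneg fun v _ => sq_nonneg (G.degreeDeviation v)).eq_or_lt with hF | hF
  · have hs0 : (∑ v, |G.degreeDeviation v|) ^ 2 = 0 :=
      le_antisymm (hs.trans_eq (by rw [← hF, mul_zero])) (sq_nonneg _)
    simpa [hs0] using graphEig_last_add_compl_le_neg_one hn G
  · have h := le_neg_sq_div_cube_of_mul_le (by positivity) hF
      (by simpa using G.sum_degreeDeviation_sq_le) hs (div_mul_cancel₀ _ (by positivity))
      (graphEig_last_add_compl_add_one_mul_le_of_degreeDeviation (by omega) G _)
    linarith
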